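/- (Angelesco's theorem, classical case) If (P_n) is a sequence of real polynomials with deg P_n = n, P_0 = 1, satisfying the Appell property in the normalization P_n'(x) = P_{n−1}(x) and a three-term recurrence P_{n+1}(x) = (A_n x + B_n) P_n(x) − C_n P_{n−1}(x) with A_n A_{n−1} C_n > 0, then there exist real a > 0, b such that P_n(x) = (a^n/n!)·He_n((x−b)/a) for all n, where He_n are the probabilists' Hermite polynomials with He_{n+1}(y) = y·He_n(y) − n·He_{n−1}(y). -/

import Mathlib

noncomputable section

open Polynomial

/-- Probabilists' Hermite polynomials: `He_0 = 1`, `He_1 = X`,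
`He_{n+2} = X He_{n+1} - (n+1) He_n`. -/
def He : ℕ → Polynomial ℝ
  | 0 => 1
  | 1 => X
  | (n + 2) => X * He (n + 1) - ((n : ℝ) + 1) • He n

lemma He_rec (n : ℕ) : He (n + 2) = X * He (n + 1) - ((n : ℝ) + 1) • He n := rfl

lemma He_deriv : ∀ n : ℕ, derivative (He (n + 1)) = ((n : ℝ) + 1) • He n
  | 0 => by simp [He]
  | 1 => by
    simp only [He_rec, He, smul_eq_C_mul]
    simp [derivative_mul]
    ring
  | (n + 2) => by
    have ih1 := He_deriv (n + 1)
    have ih0 := He_deriv n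
    rw [He_rec (n + 1)]
    rw [derivative_sub, derivative_smul, derivative_mul, derivative_X]
    rw [show n + 1 + 1 = n + 2 from rfl] at ih1
    rw [ih1, ih0, He_rec n]
    simp only [smul_eq_C_mul]
    push_cast
    simp only [C_add, C_1, map_ofNat]
    ring

/-- Angelesco's theorem: an Appell sequence (`P_n' = P_{n-1}`) which is orthogonal
(Favard: three-term recurrence with `A_n A_{n-1} C_n > 0`) consists, up to an affine
change of variable and normalization, of the Hermite polynomials:
`P_n(x) = (a^n/n!) He_n((x-b)/a)` for some `a > 0`, `b ∈ ℝ`. -/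
theorem angelesco (P : ℕ → Polynomial ℝ) (A B C' : ℕ → ℝ)
    (hdeg : ∀ n, (P n).natDegree = n) (hP0 : P 0 = 1)
    (hAppell : ∀ n : ℕ, 1 ≤ n → derivative (P n) = P (n - 1))
    (hrec0 : P 1 = (C (A 0) * X + C (B 0)) * P 0)
    (hrec : ∀ n : ℕ, 1 ≤ n →
      P (n + 1) = (C (A n) * X + C (B n)) * P n - C (C' n) * P (n - 1))
    (hpos : ∀ n : ℕ, 1 ≤ n → A n * A (n - 1) * C' n > 0) :
    ∃ a b : ℝ, 0 < a ∧
      ∀ n, P n = (a ^ n / n.factorial) • ((He n).comp (C a⁻¹ * (X - C b))) := by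
  have hne : ∀ n, P n ≠ 0 := by
    intro n h
    rcases Nat.eq_zero_or_pos n with h0 | h1
    · subst h0; rw [hP0] at h; exact one_ne_zero h
    · have := hdeg n; rw [h, natDegree_zero] at this; omega
  have hlc : ∀ n, (P n).coeff n ≠ 0 := by
    intro n
    have := leadingCoeff_ne_zero.mpr (hne n)
    rwa [leadingCoeff, hdeg n] at this
  have hA0 : A 0 = 1 := by
    have h := hAppell 1 le_rfl
    rw [hrec0, hP0, mul_one] at h
    simp at h
    have h0 := congrArg (fun p => coeff p 0) h
    simpa using h0
  have hP1 : P 1 = X + C (B 0) := by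
    rw [hrec0, hP0, hA0, mul_one, C_1, one_mul]
  have hc22 : (P 2).coeff 2 = 1 / 2 := by
    have h := congrArg (fun p => coeff p 1) (hAppell 2 (by norm_num))
    simp [coeff_derivative, hP1] at h
    linarith
  have hA1 : A 1 = 1 / 2 := by
    have h := hrec 1 le_rfl
    rw [hP1, hP0, mul_one, show (1:ℕ) + 1 = 2 from rfl] at h
    have h2 : (P 2).coeff 2
        = ((C (A 1) * X + C (B 1)) * (X + C (B 0)) - C (C' 1)).coeff 2 := by rw [h]
    rw [hc22, show ((C (A 1) * X + C (B 1)) * (X + C (B 0)) - C (C' 1) : Polynomial ℝ)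
        = C (A 1) * X ^ 2 + C (A 1 * B 0 + B 1) * X + C (B 1 * B 0 - C' 1) by
          simp only [C_add, C_sub, C_mul]; ring] at h2
    simp [coeff_X_pow, coeff_X, coeff_C] at h2
    linarith
  have hC1 : 0 < C' 1 := by
    have := hpos 1 le_rfl
    rw [hA1, hA0] at this
    norm_num at this
    linarith
  set a := Real.sqrt (2 * C' 1) with ha_def
  have ha : 0 < a := Real.sqrt_pos.mpr (by linarith)
  have ha' : a ≠ 0 := ne_of_gt ha
  have ha2 : a ^ 2 = 2 * C' 1 := Real.sq_sqrt (by linarith)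
  set b := -B 0 with hb_def
  set Q : ℕ → Polynomial ℝ :=
    fun n => ((a : ℝ) ^ n / n.factorial) • ((He n).comp (C a⁻¹ * (X - C b))) with hQ_def
  have hQ0 : Q 0 = 1 := by simp [hQ_def, He]
  have hQ1 : Q 1 = X - C b := by
    simp only [hQ_def, He]
    rw [X_comp]
    rw [smul_eq_C_mul]
    rw [← mul_assoc, ← C_mul]
    field_simp
    simp
  have dQ : ∀ n : ℕ, derivative (Q (n + 1)) = Q n := by
    intro n
    simp only [hQ_def]
    rw [derivative_smul, derivative_comp, He_deriv n]
    rw [show derivative (C a⁻¹ * (X - C b)) = C a⁻¹ by simp]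
    rw [smul_comp]
    simp only [← smul_eq_C_mul, smul_mul_assoc, mul_smul_comm, smul_smul]
    match_scalars
    push_cast [Nat.factorial_succ]
    field_simp
    ring
  have recQ : ∀ n : ℕ, Q (n + 2) =
      C (((n : ℝ) + 2)⁻¹) * ((X - C b) * Q (n + 1)) - C (a ^ 2 * ((n : ℝ) + 2)⁻¹) * Q n := by
    intro n
    simp only [hQ_def, He_rec n, sub_comp, mul_comp, X_comp, smul_comp]
    simp only [← smul_eq_C_mul, smul_mul_assoc, mul_smul_comm, smul_smul]
    match_scalars <;>
    · push_cast [Nat.factorial_succ]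
      field_simp
      ring
  have step : ∀ n : ℕ, P n = Q n → P (n + 1) = Q (n + 1) → P (n + 2) = Q (n + 2) := by
    intro n ih0 ih1
    have hdc : derivative (P (n + 2) - Q (n + 2)) = 0 := by
      rw [derivative_sub, dQ (n + 1), hAppell (n + 2) (by omega)]
      rw [show n + 2 - 1 = n + 1 from rfl, ih1, sub_self]
    have hdiff := eq_C_of_derivative_eq_zero hdc
    set c := (P (n + 2) - Q (n + 2)).coeff 0 with hc_def
    have hE : C (A (n + 1) - ((n : ℝ) + 2)⁻¹) * (X * P (n + 1))
        + C (B (n + 1) + ((n : ℝ) + 2)⁻¹ * b) * P (n + 1)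
        - C (C' (n + 1) - a ^ 2 * ((n : ℝ) + 2)⁻¹) * P n = C c := by
      have h1 := hrec (n + 1) (by omega)
      rw [show n + 1 + 1 = n + 2 from rfl, show n + 1 - 1 = n from rfl] at h1
      have h2 := recQ n
      rw [← ih1, ← ih0] at h2
      rw [h1, h2] at hdiff
      simp only [C_sub, C_add, C_mul] at hdiff ⊢
      linear_combination hdiff
    have hα : A (n + 1) - ((n : ℝ) + 2)⁻¹ = 0 := by
      have e1 := congrArg (fun p => coeff p (n + 2)) hE
      simp only [coeff_sub, coeff_add, coeff_C_mul, coeff_X_mul, coeff_C] at e1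
      rw [coeff_eq_zero_of_natDegree_lt (by rw [hdeg]; omega : (P (n+1)).natDegree < n + 2),
        coeff_eq_zero_of_natDegree_lt (by rw [hdeg]; omega : (P n).natDegree < n + 2)] at e1
      simp at e1
      rcases e1 with e1 | e1
      · exact e1
      · exact absurd e1 (hlc (n + 1))
    rw [hα, C_0, zero_mul, zero_add] at hE
    have hβ : B (n + 1) + ((n : ℝ) + 2)⁻¹ * b = 0 := by
      have e2 := congrArg (fun p => coeff p (n + 1)) hE
      simp only [coeff_sub, coeff_C_mul, coeff_C] at e2
      rw [coeff_eq_zero_of_natDegree_lt (by rw [hdeg]; omega : (P n).natDegree < n + 1)] at e2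
      simp at e2
      rcases e2 with e2 | e2
      · exact e2
      · exact absurd e2 (hlc (n + 1))
    rw [hβ, C_0, zero_mul, zero_sub] at hE
    have hc0 : c = 0 := by
      rcases Nat.eq_zero_or_pos n with h0 | h1
      · subst h0
        have hγ : C' (0 + 1) - a ^ 2 * (((0 : ℕ) : ℝ) + 2)⁻¹ = 0 := by
          rw [ha2]; push_cast; ring
        rw [hγ, C_0, zero_mul, neg_zero] at hE
        exact (C_eq_zero.mp hE.symm)
      · have e3 := congrArg (fun p => coeff p n) hE
        simp only [coeff_neg, coeff_C_mul, coeff_C] at e3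
        rw [if_neg (by omega)] at e3
        have e3' := neg_eq_zero.mp e3
        have hγ : C' (n + 1) - a ^ 2 * ((n : ℝ) + 2)⁻¹ = 0 := by
          rcases mul_eq_zero.mp e3' with h | h
          · exact h
          · exact absurd h (hlc n)
        rw [hγ, C_0, zero_mul, neg_zero] at hE
        exact (C_eq_zero.mp hE.symm)
    rw [hc0, C_0] at hdiff
    exact sub_eq_zero.mp hdiff
  have key : ∀ n, P n = Q n ∧ P (n + 1) = Q (n + 1) := by
    intro n
    induction n with
    | zero =>
      refine ⟨by rw [hP0, hQ0], ?_⟩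
      rw [hP1, hQ1, hb_def, C_neg]
      ring
    | succ k ih => exact ⟨ih.2, step k ih.1 ih.2⟩
  exact ⟨a, b, ha, fun n => (key n).1⟩
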